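/- Let c, k, t be positive integers with c ≥ 2 and k ≥ t+3. Suppose R and S are cross t-intersecting subfamilies of U^{[ck]}_{c,t+1} with τ_t(R) = τ_t(S) = t+1, and R is not t-intersecting. Then either (i) t = 1 and R = {A₁, A₂, C}, S = {B₁, B₂, C} where A₁={e₁,e₂}, A₂={e₃,e₄}, B₁={e₁,e₃}, B₂={e₂,e₄}, C={e₁,e₄} are pairs of disjoint c-subsets of [ck]; or (ii) |R|·|S| < (t+2)² and |R| + |S| ≤ 8. -/

import Mathlib

open Finset

/-- `UParts c k ℓ S`: `S` is a family of `ℓ` pairwise disjoint `c`-subsets of `[ck]`. -/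
def UParts (c k ℓ : ℕ) (S : Finset (Finset (Fin (c * k)))) : Prop :=
  S.card = ℓ ∧ (∀ e ∈ S, e.card = c) ∧
    ∀ e ∈ S, ∀ f ∈ S, e ≠ f → Disjoint e f

/-- `UPartition c k F`: `F` is a `c`-uniform partition of `[ck]` into `k` blocks. -/
def UPartition (c k : ℕ) (F : Finset (Finset (Fin (c * k)))) : Prop :=
  UParts c k k F ∧ ∀ x : Fin (c * k), ∃ e ∈ F, x ∈ e

/-- Cross `t`-intersecting families: any two members from different families share `≥ t` blocks. -/
def CrossInt (c k t : ℕ) (F G : Finset (Finset (Finset (Fin (c * k))))) : Prop :=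
  ∀ A ∈ F, ∀ B ∈ G, t ≤ (A ∩ B).card

/-- `S` is a `t`-cover of the family `F`: a family of pairwise disjoint `c`-subsets meeting
every member of `F` in at least `t` blocks. -/
def IsTCover (c k t : ℕ) (F : Finset (Finset (Finset (Fin (c * k)))))
    (S : Finset (Finset (Fin (c * k)))) : Prop :=
  UParts c k S.card S ∧ ∀ A ∈ F, t ≤ (S ∩ A).card

/-- The `t`-covering number: minimum size of a `t`-cover. -/
noncomputable def tau (c k t : ℕ) (F : Finset (Finset (Finset (Fin (c * k))))) : ℕ :=
  sInf {s | ∃ S, IsTCover c k t F S ∧ S.card = s}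

/-- `θ(c,k,z) = (1/(k-z)!) · ∏_{i=z}^{k-1} C((k-i)c, c)`. -/
def theta (c k z : ℕ) : ℚ :=
  (1 / ((k - z).factorial : ℚ)) * ∏ i ∈ Finset.Ico z k, ((((k - i) * c).choose c : ℕ) : ℚ)

/-- `g(c,k,t,z) = θ(c,k,z)·C(z,t)·∏_{j=1}^{z-t}(k-(t+j-1))`. -/
def gfun (c k t z : ℕ) : ℚ :=
  theta c k z * ((z.choose t : ℕ) : ℚ) * ∏ j ∈ Finset.Icc 1 (z - t), ((k - (t + j - 1) : ℕ) : ℚ)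

/-- `f₀(c,k,t) = (k-t-1)·θ(c,k,t+1) − C(k-t-1,2)·θ(c,k,t+2)`. -/
def f0 (c k t : ℕ) : ℚ :=
  ((k - t - 1 : ℕ) : ℚ) * theta c k (t + 1) - (((k - t - 1).choose 2 : ℕ) : ℚ) * theta c k (t + 2)

/-- `f₂(c,k,t) = (t+2)·θ(c,k,t+1) − (t+1)(k-t-1)·θ(c,k,t+2)`. -/
def f2q (c k t : ℕ) : ℚ :=
  ((t : ℚ) + 2) * theta c k (t + 1) - ((t : ℚ) + 1) * ((k - t - 1 : ℕ) : ℚ) * theta c k (t + 2)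

/-!
Take `R₁, R₂ ∈ 𝓡` sharing fewer than `t` blocks. A member of `𝓢` has only `t + 1` blocks but
meets each of them in `t`, which forces `I := R₁ ∩ R₂` to have `t - 1` blocks and every `S ∈ 𝓢`
to be `I ∪ {x, y}` with `x ∈ R₁ \ R₂ = {a, a'}`, `y ∈ R₂ \ R₁ = {b, b'}`. As `τ_t(𝓢) > t`, no
block outside `I` lies in every member of `𝓢`, so `𝓢` contains two members with disjoint links,
say `{a, b}` and `{a', b'}`; the same argument applied to them puts the links of all members of
`𝓡` in `{a, b} × {a', b'}`. So `𝓡` may use only the links `{a, a'}`, `{b, b'}`, `{a, b'}`,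
`{a', b}` and `𝓢` only `{a, b}`, `{a', b'}`, `{a, b'}`, `{a', b}`; as no link of `𝓡` may be
disjoint from one of `𝓢`, if `𝓡` uses one of `{a, b'}`, `{a', b}` then `𝓢` cannot use the
other. Hence `|𝓡| + |𝓢| ≤ 6` and `|𝓡| |𝓢| ≤ 9`, with equality only in the configuration of
case (i), where `t = 1` because `9 < (t + 2) ^ 2` otherwise.
-/

section Intersections

variable {α : Type*} [DecidableEq α]

theorem card_inter_add_card_inter_eq (P₁ P₂ Q : Finset α) :
    #(P₁ ∩ Q) + #(P₂ ∩ Q) = #(P₁ ∩ Q ∪ P₂ ∩ Q) + #(P₁ ∩ P₂ ∩ Q) := by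
  rw [inter_inter_distrib_right, card_union_add_card_inter]

theorem le_card_inter_add_one {t : ℕ} {P₁ P₂ Q : Finset α} (hQ : #Q ≤ t + 1)
    (h₁ : t ≤ #(P₁ ∩ Q)) (h₂ : t ≤ #(P₂ ∩ Q)) : t ≤ #(P₁ ∩ P₂) + 1 := by
  have := card_inter_add_card_inter_eq P₁ P₂ Q
  have := card_le_card
    (union_subset (s := P₁ ∩ Q) (t := P₂ ∩ Q) inter_subset_right inter_subset_right)
  have := card_le_card (inter_subset_left : P₁ ∩ P₂ ∩ Q ⊆ P₁ ∩ P₂)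
  omega

theorem exists_eq_inter_union_pair {P₁ P₂ Q : Finset α} (hQ : #Q ≤ #(P₁ ∩ P₂) + 2)
    (h₁ : #(P₁ ∩ P₂) < #(P₁ ∩ Q)) (h₂ : #(P₁ ∩ P₂) < #(P₂ ∩ Q)) :
    ∃ x ∈ P₁ \ P₂, ∃ y ∈ P₂ \ P₁, Q = P₁ ∩ P₂ ∪ {x, y} := by
  have hsum := card_inter_add_card_inter_eq P₁ P₂ Q
  have hUQ : P₁ ∩ Q ∪ P₂ ∩ Q ⊆ Q := union_subset inter_subset_right inter_subset_right
  have hIQ : P₁ ∩ P₂ ∩ Q ⊆ P₁ ∩ P₂ := inter_subset_left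
  have hU := card_le_card hUQ
  have hI := card_le_card hIQ
  have hIQ_eq := eq_of_subset_of_card_le hIQ (by omega)
  have hUQ_eq := eq_of_subset_of_card_le hUQ (by omega)
  have hI₁ : P₁ ∩ P₂ ⊆ P₁ ∩ Q := by
    rw [← hIQ_eq]; exact inter_subset_inter_right inter_subset_left
  have hI₂ : P₁ ∩ P₂ ⊆ P₂ ∩ Q := by
    rw [← hIQ_eq]; exact inter_subset_inter_right inter_subset_right
  obtain ⟨x, hxI, hx⟩ := exists_eq_insert_iff.mpr ⟨hI₁, by omega⟩
  obtain ⟨y, hyI, hy⟩ := exists_eq_insert_iff.mpr ⟨hI₂, by omega⟩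
  have hx₁ : x ∈ P₁ := (mem_inter.mp (hx ▸ mem_insert_self x _)).1
  have hy₂ : y ∈ P₂ := (mem_inter.mp (hy ▸ mem_insert_self y _)).1
  refine ⟨x, mem_sdiff.mpr ⟨hx₁, fun h => hxI (mem_inter.mpr ⟨hx₁, h⟩)⟩,
    y, mem_sdiff.mpr ⟨hy₂, fun h => hyI (mem_inter.mpr ⟨h, hy₂⟩)⟩, ?_⟩
  rw [← hUQ_eq, ← hx, ← hy]
  ext z
  simp only [mem_union, mem_insert, mem_singleton]
  tauto

theorem eq_triple_or_card_mul_card_le_eight {β : Type*} [DecidableEq β] {𝓡 𝓢 : Finset β}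
    {r₁ r₂ s₁ s₂ p q : β} (h𝓡 : 𝓡 ⊆ {r₁, r₂, p, q}) (h𝓢 : 𝓢 ⊆ {s₁, s₂, p, q})
    (hr₁ : r₁ ∈ 𝓡) (hr₂ : r₂ ∈ 𝓡)
    (hs₁ : s₁ ∈ 𝓢) (hs₂ : s₂ ∈ 𝓢) (hpq : p ∈ 𝓡 → q ∉ 𝓢) (hqp : q ∈ 𝓡 → p ∉ 𝓢) :
    (∃ x ∈ ({p, q} : Finset β), 𝓡 = {r₁, r₂, x} ∧ 𝓢 = {s₁, s₂, x}) ∨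
      (#𝓡 * #𝓢 ≤ 8 ∧ #𝓡 + #𝓢 ≤ 6) := by
  have card_le {𝓐 : Finset β} {T : Finset β} (h : ∀ x ∈ 𝓐, x ∈ T) : #𝓐 ≤ #T := card_le_card h
  have h𝓡₄ : #𝓡 ≤ 4 := (card_le h𝓡).trans card_le_four
  have h𝓢₄ : #𝓢 ≤ 4 := (card_le h𝓢).trans card_le_four
  by_cases hp : p ∈ 𝓡 <;> by_cases hq : q ∈ 𝓡
  · have : #𝓢 ≤ 2 := (card_le (T := {s₁, s₂}) (by grind)).trans card_le_two
    right; constructor <;> nlinarith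
  · have h𝓡₃ : 𝓡 ⊆ {r₁, r₂, p} := by grind
    have h𝓢₃ : 𝓢 ⊆ {s₁, s₂, p} := by grind
    by_cases hp' : p ∈ 𝓢
    · exact .inl ⟨p, by simp, h𝓡₃.antisymm (by grind), h𝓢₃.antisymm (by grind)⟩
    · have : #𝓢 ≤ 2 := (card_le (T := {s₁, s₂}) (by grind)).trans card_le_two
      have := (card_le_card h𝓡₃).trans card_le_three
      right; constructor <;> nlinarith
  · have h𝓡₃ : 𝓡 ⊆ {r₁, r₂, q} := by grind
    have h𝓢₃ : 𝓢 ⊆ {s₁, s₂, q} := by grind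
    by_cases hq' : q ∈ 𝓢
    · exact .inl ⟨q, by simp, h𝓡₃.antisymm (by grind), h𝓢₃.antisymm (by grind)⟩
    · have : #𝓢 ≤ 2 := (card_le (T := {s₁, s₂}) (by grind)).trans card_le_two
      have := (card_le_card h𝓡₃).trans card_le_three
      right; constructor <;> nlinarith
  · have : #𝓡 ≤ 2 := (card_le (T := {r₁, r₂}) (by grind)).trans card_le_two
    right; constructor <;> nlinarith

section Links

variable {I : Finset α} {a a' b b' : α}

theorem exists_notMem_of_forall_exists_not_subset {t : ℕ} {𝓢 : Finset (Finset α)} {z : α}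
    (hI : #I + 1 = t) (hz : z ∉ I) (hI𝓢 : ∀ S ∈ 𝓢, I ⊆ S)
    (hcover : ∀ T : Finset α, #T = t → ∃ S ∈ 𝓢, ¬ T ⊆ S) : ∃ S ∈ 𝓢, z ∉ S := by
  obtain ⟨S, hS, hTS⟩ := hcover (insert z I) (by rw [card_insert_of_notMem hz, hI])
  exact ⟨S, hS, fun hzS => hTS (insert_subset hzS (hI𝓢 S hS))⟩

theorem union_pair_inter_union_pair {x y z w : α} (hx : x ∉ I) (hy : y ∉ I)
    (hxz : x ≠ z) (hxw : x ≠ w) (hyz : y ≠ z) (hyw : y ≠ w) :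
    (I ∪ {x, y}) ∩ (I ∪ {z, w}) = I := by
  grind

theorem union_pair_mem_of_forall_exists_notMem {𝓢 : Finset (Finset α)}
    (h𝓢 : ∀ S ∈ 𝓢, ∃ x ∈ ({a, a'} : Finset α), ∃ y ∈ ({b, b'} : Finset α), S = I ∪ {x, y})
    (hcover : ∀ z ∈ ({a, a', b, b'} : Finset α), ∃ S ∈ 𝓢, z ∉ S) :
    (I ∪ {a, b} ∈ 𝓢 ∧ I ∪ {a', b'} ∈ 𝓢) ∨ (I ∪ {a, b'} ∈ 𝓢 ∧ I ∪ {a', b} ∈ 𝓢) := by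
  have avoid : ∀ z ∈ ({a, a', b, b'} : Finset α), ∃ x ∈ ({a, a'} : Finset α),
      ∃ y ∈ ({b, b'} : Finset α), z ≠ x ∧ z ≠ y ∧ I ∪ {x, y} ∈ 𝓢 := by
    intro z hz
    obtain ⟨S, hS, hzS⟩ := hcover z hz
    obtain ⟨x, hx, y, hy, rfl⟩ := h𝓢 S hS
    exact ⟨x, hx, y, hy, by grind⟩
  simp only [mem_insert, mem_singleton, forall_eq_or_imp, forall_eq, exists_eq_or_imp,
    exists_eq_left, ne_eq, not_true_eq_false, false_and, false_or, or_false] at avoid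
  tauto

theorem exceptional_or_card_mul_card_lt_of_union_pair {t : ℕ} {𝓡 𝓢 : Finset (Finset α)}
    (h𝓡 : ∀ R ∈ 𝓡, #R = t + 1) (hcross : ∀ R ∈ 𝓡, ∀ S ∈ 𝓢, t ≤ #(R ∩ S)) (hI : #I + 1 = t)
    (ha : a ∉ I) (ha' : a' ∉ I) (hb : b ∉ I) (hb' : b' ∉ I) (haa' : a ≠ a') (hbb' : b ≠ b')
    (hab : a ≠ b) (hab' : a ≠ b') (ha'b : a' ≠ b) (ha'b' : a' ≠ b')
    (hR₁ : I ∪ {a, a'} ∈ 𝓡) (hR₂ : I ∪ {b, b'} ∈ 𝓡) (hS₁ : I ∪ {a, b} ∈ 𝓢)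
    (hS₂ : I ∪ {a', b'} ∈ 𝓢)
    (h𝓢 : ∀ S ∈ 𝓢, ∃ x ∈ ({a, a'} : Finset α), ∃ y ∈ ({b, b'} : Finset α), S = I ∪ {x, y}) :
    (t = 1 ∧ ∃ e₁ e₂ e₃ e₄ : α,
      𝓡 = {{e₁, e₂}, {e₃, e₄}, {e₁, e₄}} ∧ 𝓢 = {{e₁, e₃}, {e₂, e₄}, {e₁, e₄}}) ∨
    (#𝓡 * #𝓢 < (t + 2) ^ 2 ∧ #𝓡 + #𝓢 ≤ 6) := by
  have not_cross {x y z w : α} (hx : x ∉ I) (hy : y ∉ I) (hxz : x ≠ z) (hxw : x ≠ w)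
      (hyz : y ≠ z) (hyw : y ≠ w) (hR : I ∪ {x, y} ∈ 𝓡) (hS : I ∪ {z, w} ∈ 𝓢) : False := by
    have := hcross _ hR _ hS
    rw [union_pair_inter_union_pair hx hy hxz hxw hyz hyw] at this
    omega
  have h𝓡sub : 𝓡 ⊆ {I ∪ {a, a'}, I ∪ {b, b'}, I ∪ {a, b'}, I ∪ {a', b}} := by
    intro R hR
    have hmeet := union_pair_inter_union_pair (I := I) ha hb haa' hab' ha'b.symm hbb'
    obtain ⟨x, hx, y, hy, rfl⟩ := exists_eq_inter_union_pair (Q := R)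
      (by rw [hmeet, h𝓡 R hR]; omega)
      (by rw [hmeet, inter_comm]; have := hcross R hR _ hS₁; omega)
      (by rw [hmeet, inter_comm]; have := hcross R hR _ hS₂; omega)
    have hx' : x = a ∨ x = b := by
      simp only [mem_sdiff, mem_union, mem_insert, mem_singleton] at hx; tauto
    have hy' : y = a' ∨ y = b' := by
      simp only [mem_sdiff, mem_union, mem_insert, mem_singleton] at hy; tauto
    rw [hmeet]
    rcases hx' with rfl | rfl <;> rcases hy' with rfl | rfl <;> simp [pair_comm]
  have h𝓢sub : 𝓢 ⊆ {I ∪ {a, b}, I ∪ {a', b'}, I ∪ {a, b'}, I ∪ {a', b}} := by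
    intro S hS
    obtain ⟨x, hx, y, hy, rfl⟩ := h𝓢 S hS
    simp only [mem_insert, mem_singleton] at hx hy
    rcases hx with rfl | rfl <;> rcases hy with rfl | rfl <;> simp
  rcases eq_triple_or_card_mul_card_le_eight h𝓡sub h𝓢sub hR₁ hR₂ hS₁ hS₂
    (fun hp hq => not_cross ha hb' haa' hab ha'b'.symm hbb'.symm hp hq)
    (fun hq hp => not_cross ha' hb haa'.symm ha'b' hab.symm hbb' hq hp)
    with ⟨x, hx, rfl, rfl⟩ | ⟨hmul, hadd⟩
  · rcases Nat.lt_or_ge t 2 with ht | ht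
    · obtain rfl : I = ∅ := card_eq_zero.mp (by omega)
      refine .inl ⟨by omega, ?_⟩
      simp only [mem_insert, mem_singleton] at hx
      rcases hx with rfl | rfl <;> simp only [empty_union]
      · exact ⟨a, a', b, b', rfl, rfl⟩
      · exact ⟨a', a, b', b, by rw [pair_comm a' a, pair_comm b' b], insert_comm _ _ _⟩
    · have := card_le_three (a := I ∪ {a, a'}) (b := I ∪ {b, b'}) (c := x)
      have := card_le_three (a := I ∪ {a, b}) (b := I ∪ {a', b'}) (c := x)
      right
      constructor <;> nlinarith
  · right
    exact ⟨by nlinarith, hadd⟩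

theorem exceptional_or_card_mul_card_lt {t : ℕ} {𝓡 𝓢 : Finset (Finset α)} {R₁ R₂ : Finset α}
    (h𝓡 : ∀ R ∈ 𝓡, #R = t + 1) (h𝓢 : ∀ S ∈ 𝓢, #S = t + 1)
    (hcross : ∀ R ∈ 𝓡, ∀ S ∈ 𝓢, t ≤ #(R ∩ S)) (hR₁ : R₁ ∈ 𝓡) (hR₂ : R₂ ∈ 𝓡)
    (hR₁₂ : #(R₁ ∩ R₂) < t) (h𝓢ne : 𝓢.Nonempty)
    (hcover : ∀ T : Finset α, #T = t → ∃ S ∈ 𝓢, ¬ T ⊆ S) :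
    (t = 1 ∧ ∃ e₁ e₂ e₃ e₄ : α,
      𝓡 = {{e₁, e₂}, {e₃, e₄}, {e₁, e₄}} ∧ 𝓢 = {{e₁, e₃}, {e₂, e₄}, {e₁, e₄}}) ∨
    (#𝓡 * #𝓢 < (t + 2) ^ 2 ∧ #𝓡 + #𝓢 ≤ 6) := by
  obtain ⟨S₀, hS₀⟩ := h𝓢ne
  have hI : #(R₁ ∩ R₂) + 1 = t := le_antisymm (by omega)
    (le_card_inter_add_one (h𝓢 S₀ hS₀).le (hcross _ hR₁ _ hS₀) (hcross _ hR₂ _ hS₀))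
  obtain ⟨a, a', haa', hR₁a⟩ := card_eq_two.mp
    (show #(R₁ \ R₂) = 2 by rw [card_sdiff, inter_comm, h𝓡 _ hR₁]; omega)
  obtain ⟨b, b', hbb', hR₂b⟩ := card_eq_two.mp
    (show #(R₂ \ R₁) = 2 by rw [card_sdiff, h𝓡 _ hR₂]; omega)
  have ha := mem_sdiff.mp (hR₁a ▸ mem_insert_self a {a'})
  have ha' := mem_sdiff.mp (hR₁a ▸ mem_insert_of_mem (mem_singleton_self a'))
  have hb := mem_sdiff.mp (hR₂b ▸ mem_insert_self b {b'})
  have hb' := mem_sdiff.mp (hR₂b ▸ mem_insert_of_mem (mem_singleton_self b'))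
  have hab : a ≠ b := fun h => ha.2 (h ▸ hb.1)
  have hab' : a ≠ b' := fun h => ha.2 (h ▸ hb'.1)
  have ha'b : a' ≠ b := fun h => ha'.2 (h ▸ hb.1)
  have ha'b' : a' ≠ b' := fun h => ha'.2 (h ▸ hb'.1)
  have fresh : ∀ z ∈ ({a, a', b, b'} : Finset α), z ∉ R₁ ∩ R₂ := by
    simp only [mem_insert, mem_singleton, forall_eq_or_imp, forall_eq, mem_inter, not_and]
    exact ⟨fun _ => ha.2, fun _ => ha'.2, fun h => absurd h hb.2, fun h => absurd h hb'.2⟩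
  have hR₁eq : R₁ ∩ R₂ ∪ {a, a'} = R₁ := by rw [← hR₁a, union_comm, sdiff_union_inter]
  have hR₂eq : R₁ ∩ R₂ ∪ {b, b'} = R₂ := by rw [← hR₂b, inter_comm, union_comm, sdiff_union_inter]
  have h𝓢struct : ∀ S ∈ 𝓢, ∃ x ∈ ({a, a'} : Finset α), ∃ y ∈ ({b, b'} : Finset α),
      S = R₁ ∩ R₂ ∪ {x, y} := by
    intro S hS
    obtain ⟨x, hx, y, hy, hSeq⟩ := exists_eq_inter_union_pair (P₁ := R₁) (P₂ := R₂)
      (by rw [h𝓢 S hS]; omega) (by have := hcross _ hR₁ _ hS; omega)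
      (by have := hcross _ hR₂ _ hS; omega)
    exact ⟨x, hR₁a ▸ hx, y, hR₂b ▸ hy, hSeq⟩
  have hI𝓢 : ∀ S ∈ 𝓢, R₁ ∩ R₂ ⊆ S := fun S hS => by
    obtain ⟨x, -, y, -, rfl⟩ := h𝓢struct S hS
    exact subset_union_left
  have hcover' : ∀ z ∈ ({a, a', b, b'} : Finset α), ∃ S ∈ 𝓢, z ∉ S := fun z hz =>
    exists_notMem_of_forall_exists_not_subset hI (fresh z hz) hI𝓢 hcover
  have fa := fresh a (by simp)
  have fa' := fresh a' (by simp)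
  have fb := fresh b (by simp)
  have fb' := fresh b' (by simp)
  rcases union_pair_mem_of_forall_exists_notMem h𝓢struct hcover' with ⟨hS₁, hS₂⟩ | ⟨hS₁, hS₂⟩
  · exact exceptional_or_card_mul_card_lt_of_union_pair h𝓡 hcross hI fa fa' fb fb' haa' hbb'
      hab hab' ha'b ha'b' (by rwa [hR₁eq]) (by rwa [hR₂eq]) hS₁ hS₂ h𝓢struct
  · exact exceptional_or_card_mul_card_lt_of_union_pair h𝓡 hcross hI fa fa' fb' fb haa' hbb'.symm
      hab' hab ha'b' ha'b (by rwa [hR₁eq]) (by rwa [pair_comm, hR₂eq]) hS₁ hS₂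
      (by simpa only [pair_comm b' b] using h𝓢struct)

end Links

end Intersections

section Cover

variable {c k t : ℕ}

theorem UParts.of_subset {ℓ : ℕ} {S T : Finset (Finset (Fin (c * k)))} (h : UParts c k ℓ S)
    (hT : T ⊆ S) : UParts c k #T T :=
  ⟨rfl, fun e he => h.2.1 e (hT he), fun e he f hf => h.2.2 e (hT he) f (hT hf)⟩

theorem tau_le_card {F : Finset (Finset (Finset (Fin (c * k))))}
    {T : Finset (Finset (Fin (c * k)))} (h : IsTCover c k t F T) : tau c k t F ≤ #T :=
  Nat.sInf_le ⟨T, h, rfl⟩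

theorem nonempty_of_tau_ne_zero {F : Finset (Finset (Finset (Fin (c * k))))}
    (h : tau c k t F ≠ 0) : F.Nonempty := by
  rw [nonempty_iff_ne_empty]
  rintro rfl
  exact h (Nat.le_zero.mp (tau_le_card (T := ∅) ⟨⟨rfl, by simp, by simp⟩, by simp⟩))

theorem exists_not_subset_of_lt_tau {ℓ : ℕ} {F : Finset (Finset (Finset (Fin (c * k))))}
    (hUF : ∀ A ∈ F, UParts c k ℓ A) (hF : F.Nonempty) (hτ : t < tau c k t F)
    {T : Finset (Finset (Fin (c * k)))} (hT : #T = t) : ∃ A ∈ F, ¬ T ⊆ A := by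
  by_contra! hsub
  obtain ⟨A₀, hA₀⟩ := hF
  have hcover : IsTCover c k t F T :=
    ⟨(hUF A₀ hA₀).of_subset (hsub A₀ hA₀), fun A hA => by rw [inter_eq_left.mpr (hsub A hA), hT]⟩
  exact absurd (tau_le_card hcover) (by omega)

end Cover

theorem stmt7_general (c k t : ℕ)
    (𝓡 𝓢 : Finset (Finset (Finset (Fin (c * k)))))
    (h𝓡 : ∀ R ∈ 𝓡, UParts c k (t + 1) R) (h𝓢 : ∀ S ∈ 𝓢, UParts c k (t + 1) S)
    (hcross : CrossInt c k t 𝓡 𝓢)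
    (hτS : tau c k t 𝓢 = t + 1)
    (hnotint : ¬ ∀ R₁ ∈ 𝓡, ∀ R₂ ∈ 𝓡, t ≤ (R₁ ∩ R₂).card) :
    (t = 1 ∧ ∃ e₁ e₂ e₃ e₄ : Finset (Fin (c * k)),
      UParts c k 2 {e₁, e₂} ∧ UParts c k 2 {e₃, e₄} ∧ UParts c k 2 {e₁, e₃} ∧
        UParts c k 2 {e₂, e₄} ∧ UParts c k 2 {e₁, e₄} ∧
        𝓡 = {{e₁, e₂}, {e₃, e₄}, {e₁, e₄}} ∧ 𝓢 = {{e₁, e₃}, {e₂, e₄}, {e₁, e₄}}) ∨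
    (𝓡.card * 𝓢.card < (t + 2) ^ 2 ∧ 𝓡.card + 𝓢.card ≤ 8) := by
  simp only [not_forall, not_le] at hnotint
  obtain ⟨R₁, hR₁, R₂, hR₂, hR₁₂⟩ := hnotint
  have h𝓢ne := nonempty_of_tau_ne_zero (by omega : tau c k t 𝓢 ≠ 0)
  have hcover (T : Finset (Finset (Fin (c * k)))) (hT : #T = t) :=
    exists_not_subset_of_lt_tau h𝓢 h𝓢ne (by omega) hT
  rcases exceptional_or_card_mul_card_lt (fun R hR => (h𝓡 R hR).1) (fun S hS => (h𝓢 S hS).1)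
      hcross hR₁ hR₂ hR₁₂ h𝓢ne hcover with ⟨rfl, e₁, e₂, e₃, e₄, rfl, rfl⟩ | ⟨hmul, hadd⟩
  · exact .inl ⟨rfl, e₁, e₂, e₃, e₄, h𝓡 _ (by simp), h𝓡 _ (by simp), h𝓢 _ (by simp),
      h𝓢 _ (by simp), h𝓡 _ (by simp), rfl, rfl⟩
  · exact .inr ⟨hmul, by omega⟩

theorem stmt7 (c k t : ℕ) (hc : 2 ≤ c) (ht : 1 ≤ t) (hk : t + 3 ≤ k)
    (𝓡 𝓢 : Finset (Finset (Finset (Fin (c * k)))))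
    (h𝓡 : ∀ R ∈ 𝓡, UParts c k (t + 1) R) (h𝓢 : ∀ S ∈ 𝓢, UParts c k (t + 1) S)
    (hcross : CrossInt c k t 𝓡 𝓢)
    (hτR : tau c k t 𝓡 = t + 1) (hτS : tau c k t 𝓢 = t + 1)
    (hnotint : ¬ ∀ R₁ ∈ 𝓡, ∀ R₂ ∈ 𝓡, t ≤ (R₁ ∩ R₂).card) :
    (t = 1 ∧ ∃ e₁ e₂ e₃ e₄ : Finset (Fin (c * k)),
      UParts c k 2 {e₁, e₂} ∧ UParts c k 2 {e₃, e₄} ∧ UParts c k 2 {e₁, e₃} ∧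
        UParts c k 2 {e₂, e₄} ∧ UParts c k 2 {e₁, e₄} ∧
        𝓡 = {{e₁, e₂}, {e₃, e₄}, {e₁, e₄}} ∧ 𝓢 = {{e₁, e₃}, {e₂, e₄}, {e₁, e₄}}) ∨
    (𝓡.card * 𝓢.card < (t + 2) ^ 2 ∧ 𝓡.card + 𝓢.card ≤ 8) :=
  stmt7_general c k t 𝓡 𝓢 h𝓡 h𝓢 hcross hτS hnotint
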